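/- arXiv:2009.04624 — 6 statements merged into one kernel-verified Lean document; each statement's English description precedes it below -/
import Mathlib

section
/- Let α ≥ β > 0, C₂ ≥ C₁ > 0, and let h : [0,∞) → ℝ be a nonnegative absolutely continuous function satisfying h'(t) + C₁·min(h(t)^α, h(t)^β) ≤ C₂ for a.e. t > 0. If h(0) ≤ (C₂/C₁)^{1/β}, then h(t) ≤ (C₂/C₁)^{1/β} for all t ≥ 0. -/
open MeasureTheory

/-- Lemma 5.1(1): if `h' + C₁ min(h^α, h^β) ≤ C₂` a.e. with `α ≥ β > 0`,
`C₂ ≥ C₁ > 0`, `h` nonnegative and absolutely continuous, and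
`h 0 ≤ (C₂/C₁)^(1/β)`, then `h t ≤ (C₂/C₁)^(1/β)` for all `t ≥ 0`. -/
theorem stmt_0 (α β C₁ C₂ : ℝ) (hβ : 0 < β) (hαβ : β ≤ α)
    (hC₁ : 0 < C₁) (hC : C₁ ≤ C₂)
    (h h' : ℝ → ℝ)
    (hnn : ∀ t : ℝ, 0 ≤ t → 0 ≤ h t)
    (hFTC : ∀ s t : ℝ, 0 ≤ s → s ≤ t → h t - h s = ∫ τ in s..t, h' τ)
    (hInt : ∀ s t : ℝ, 0 ≤ s → s ≤ t → IntervalIntegrable h' volume s t)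
    (hineq : ∀ᵐ t ∂(volume.restrict (Set.Ioi (0:ℝ))),
      h' t + C₁ * min (h t ^ α) (h t ^ β) ≤ C₂)
    (h0 : h 0 ≤ (C₂ / C₁) ^ (1 / β)) :
    ∀ t : ℝ, 0 ≤ t → h t ≤ (C₂ / C₁) ^ (1 / β) := by
  intro t ht
  by_contra hcon
  push_neg at hcon
  set M := (C₂ / C₁) ^ (1 / β) with hM
  have hratio : 1 ≤ C₂ / C₁ := (one_le_div hC₁).mpr hC
  have hM1 : 1 ≤ M := Real.one_le_rpow hratio (by positivity)
  -- continuity of h on [0, t]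
  have hcont : ContinuousOn h (Set.Icc 0 t) := by
    have hint : IntervalIntegrable h' volume 0 t := hInt 0 t le_rfl ht
    have hio : IntegrableOn h' (Set.uIcc 0 t) volume := by
      rw [Set.uIcc_of_le ht]
      exact (intervalIntegrable_iff_integrableOn_Icc_of_le ht).mp hint
    have hc : ContinuousOn (fun x => h 0 + ∫ τ in (0:ℝ)..x, h' τ) (Set.uIcc 0 t) :=
      continuousOn_const.add (intervalIntegral.continuousOn_primitive_interval hio)
    rw [Set.uIcc_of_le ht] at hc
    refine hc.congr fun x hx => ?_
    have := hFTC 0 x le_rfl hx.1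
    linarith
  -- the barrier set
  set S : Set ℝ := Set.Icc 0 t ∩ h ⁻¹' Set.Iic M with hS
  have hSne : S.Nonempty := ⟨0, ⟨le_rfl, ht⟩, h0⟩
  have hSbdd : BddAbove S := ⟨t, fun x hx => hx.1.2⟩
  have hSclosed : IsClosed S :=
    hcont.preimage_isClosed_of_isClosed isClosed_Icc isClosed_Iic
  set s₀ := sSup S with hs₀
  have hs₀mem : s₀ ∈ S := hSclosed.csSup_mem hSne hSbdd
  have hs₀0 : 0 ≤ s₀ := hs₀mem.1.1
  have hs₀t : s₀ ≤ t := hs₀mem.1.2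
  have hs₀M : h s₀ ≤ M := hs₀mem.2
  -- on (s₀, t], h > M
  have hgtM : ∀ τ ∈ Set.Ioc s₀ t, M < h τ := by
    intro τ hτ
    by_contra hle
    push_neg at hle
    have : τ ∈ S := ⟨⟨hs₀0.trans hτ.1.le, hτ.2⟩, hle⟩
    exact absurd (le_csSup hSbdd this) (not_le.mpr hτ.1)
  -- h' ≤ 0 a.e. on (s₀, t]
  have hae : ∀ᵐ τ ∂(volume.restrict (Set.Ioc s₀ t)), h' τ ≤ 0 := by
    have hsub : Set.Ioc s₀ t ⊆ Set.Ioi 0 := fun x hx => lt_of_le_of_lt hs₀0 hx.1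
    have h1 := ae_restrict_of_ae_restrict_of_subset hsub hineq
    have h2 : ∀ᵐ τ ∂(volume.restrict (Set.Ioc s₀ t)), τ ∈ Set.Ioc s₀ t :=
      ae_restrict_mem measurableSet_Ioc
    filter_upwards [h1, h2] with τ hτ hmem
    have hgt : M < h τ := hgtM τ hmem
    have hone : (1:ℝ) ≤ h τ := le_of_lt (lt_of_le_of_lt hM1 hgt)
    have hβle : C₂ / C₁ ≤ h τ ^ β := by
      have hMpos : (0:ℝ) ≤ M := by positivity
      have hr : M ^ β ≤ h τ ^ β := Real.rpow_le_rpow hMpos hgt.le hβ.le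
      rwa [hM, one_div, Real.rpow_inv_rpow (by positivity) hβ.ne'] at hr
    have hmin : C₂ / C₁ ≤ min (h τ ^ α) (h τ ^ β) :=
      le_min (hβle.trans (Real.rpow_le_rpow_of_exponent_le hone hαβ)) hβle
    have hCmin : C₂ ≤ C₁ * min (h τ ^ α) (h τ ^ β) := by
      calc C₂ = C₁ * (C₂ / C₁) := by field_simp
      _ ≤ C₁ * min (h τ ^ α) (h τ ^ β) := by
          exact mul_le_mul_of_nonneg_left hmin hC₁.le
    linarith
  -- conclude
  have hintle : (∫ τ in s₀..t, h' τ) ≤ 0 := by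
    rw [← neg_nonneg, ← intervalIntegral.integral_neg]
    refine intervalIntegral.integral_nonneg_of_ae_restrict hs₀t ?_
    rw [← Measure.restrict_congr_set Ioc_ae_eq_Icc]
    filter_upwards [hae] with τ hτ
    simpa using neg_nonneg.mpr hτ
  have := hFTC s₀ t hs₀0 hs₀t
  have : h t ≤ M := by linarith
  exact absurd this (not_le.mpr hcon)
end

section
/- Let α ≥ β > 0, C₂ ≥ C₁ > 0, β > 1, and let h : [0,∞) → ℝ be a nonnegative absolutely continuous function satisfying h'(t) + C₁·min(h(t)^α, h(t)^β) ≤ C₂ for a.e. t > 0. If h(0) > (C₂/C₁)^{1/β}, then for all t ≥ 0, h(t) ≤ (C₂/C₁)^{1/β} + [ (h(0) − (C₂/C₁)^{1/β})^{1−β} + C₁(β−1)t ]^{1/(1−β)}. -/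
open MeasureTheory

lemma aux_superadd {a b p : ℝ} (ha : 0 ≤ a) (hb : 0 ≤ b) (hp : 1 ≤ p) :
    a ^ p + b ^ p ≤ (a + b) ^ p := by
  have H := NNReal.add_rpow_le_rpow_add a.toNNReal b.toNNReal hp
  have := (NNReal.coe_le_coe).2 H
  simpa [NNReal.coe_rpow, ← Real.toNNReal_add ha hb,
    Real.coe_toNNReal _ ha, Real.coe_toNNReal _ hb,
    Real.coe_toNNReal _ (add_nonneg ha hb)] using this

/-- Lemma 5.1(2), case `β > 1`: decay estimate when `h 0 > (C₂/C₁)^(1/β)`. -/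
theorem stmt_1 (α β C₁ C₂ : ℝ) (hβ : 1 < β) (hαβ : β ≤ α)
    (hC₁ : 0 < C₁) (hC : C₁ ≤ C₂)
    (h h' : ℝ → ℝ)
    (hnn : ∀ t : ℝ, 0 ≤ t → 0 ≤ h t)
    (hFTC : ∀ s t : ℝ, 0 ≤ s → s ≤ t → h t - h s = ∫ τ in s..t, h' τ)
    (hInt : ∀ s t : ℝ, 0 ≤ s → s ≤ t → IntervalIntegrable h' volume s t)
    (hineq : ∀ᵐ t ∂(volume.restrict (Set.Ioi (0:ℝ))),
      h' t + C₁ * min (h t ^ α) (h t ^ β) ≤ C₂)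
    (h0 : (C₂ / C₁) ^ (1 / β) < h 0) :
    ∀ t : ℝ, 0 ≤ t →
      h t ≤ (C₂ / C₁) ^ (1 / β) +
        ((h 0 - (C₂ / C₁) ^ (1 / β)) ^ (1 - β) + C₁ * (β - 1) * t) ^ (1 / (1 - β)) := by
  set K : ℝ := (C₂ / C₁) ^ (1 / β) with hKdef
  set A : ℝ := (h 0 - K) ^ (1 - β) with hAdef
  set B : ℝ := C₁ * (β - 1) with hBdef
  set φ : ℝ → ℝ := fun t => (A + B * t) ^ (1 / (1 - β)) with hφdef
  have hβ0 : (0:ℝ) < β := by linarith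
  have h1β : (1:ℝ) - β ≠ 0 := by intro hh; linarith [hβ]
  have hr1 : (1:ℝ) ≤ C₂ / C₁ := (one_le_div hC₁).2 hC
  have hK1 : (1:ℝ) ≤ K := Real.one_le_rpow hr1 (by positivity)
  have hKβ : K ^ β = C₂ / C₁ := by
    rw [hKdef, ← Real.rpow_mul (by positivity), one_div, inv_mul_cancel₀ (ne_of_gt hβ0),
      Real.rpow_one]
  have hg0 : 0 < h 0 - K := by linarith
  have hA : 0 < A := Real.rpow_pos_of_pos hg0 _
  have hB : 0 < B := by
    have : (0:ℝ) < β - 1 := by linarith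
    positivity
  have hABpos : ∀ x : ℝ, 0 ≤ x → 0 < A + B * x := by
    intro x hx; nlinarith [mul_nonneg hB.le hx]
  have hφpos : ∀ x : ℝ, 0 ≤ x → 0 < φ x := fun x hx =>
    Real.rpow_pos_of_pos (hABpos x hx) _
  have hφ0 : φ 0 = h 0 - K := by
    simp only [hφdef, mul_zero, add_zero, hAdef]
    rw [← Real.rpow_mul hg0.le, mul_one_div, div_self h1β, Real.rpow_one]
  -- derivative of φ
  have hφderiv : ∀ x : ℝ, 0 ≤ x → HasDerivAt φ (-C₁ * φ x ^ β) x := by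
    intro x hx
    have hlin : HasDerivAt (fun y => A + B * y) B x := by
      simpa using ((hasDerivAt_id x).const_mul B).const_add A
    have hd := hlin.rpow_const (p := 1 / (1 - β)) (Or.inl (ne_of_gt (hABpos x hx)))
    convert hd using 1
    have h1 : φ x ^ β = (A + B * x) ^ (1 / (1 - β) * β) := by
      rw [hφdef]
      rw [← Real.rpow_mul (hABpos x hx).le]
    have h2 : (1 / (1 - β) : ℝ) - 1 = 1 / (1 - β) * β := by
      field_simp
      try ring
    rw [h1, ← h2]
    have hB' : B * (1 / (1 - β)) = -C₁ := by
      rw [hBdef]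
      field_simp
      try ring
    rw [hB']
  intro t₀ ht₀
  by_contra hcon
  push_neg at hcon
  -- continuity of h on [0, t₀]
  have hconth : ContinuousOn h (Set.Icc 0 t₀) := by
    have hprim : ContinuousOn (fun b => ∫ x in (0:ℝ)..b, h' x) (Set.uIcc 0 t₀) :=
      intervalIntegral.continuousOn_primitive_interval' (hInt 0 t₀ le_rfl ht₀)
        Set.left_mem_uIcc
    rw [Set.uIcc_of_le ht₀] at hprim
    have heq : Set.EqOn h (fun b => h 0 + ∫ x in (0:ℝ)..b, h' x) (Set.Icc 0 t₀) := by
      intro x hx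
      have := hFTC 0 x le_rfl hx.1
      simp only
      linarith
    exact ContinuousOn.congr (continuousOn_const.add hprim) heq
  have hcontφ : ContinuousOn φ (Set.Icc 0 t₀) := by
    apply ContinuousOn.rpow_const
    · exact (continuousOn_const.add (continuousOn_const.mul continuousOn_id))
    · intro x hx; exact Or.inl (ne_of_gt (hABpos x hx.1))
  -- the set where the desired inequality holds
  set S : Set ℝ := Set.Icc 0 t₀ ∩ {x | h x - φ x ≤ K} with hSdef
  have hScl : IsClosed S := by
    have : ContinuousOn (fun x => h x - φ x) (Set.Icc 0 t₀) := hconth.sub hcontφ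
    exact this.preimage_isClosed_of_isClosed isClosed_Icc (isClosed_Iic (a := K))
  have h0S : (0:ℝ) ∈ S := by
    constructor
    · exact ⟨le_rfl, ht₀⟩
    · simp only [Set.mem_setOf_eq, hφ0]; linarith
  have hSne : S.Nonempty := ⟨0, h0S⟩
  have hScomp : IsCompact S := (isCompact_Icc (a := (0:ℝ)) (b := t₀)).of_isClosed_subset
    hScl Set.inter_subset_left
  set s₀ : ℝ := sSup S with hs₀def
  have hs₀S : s₀ ∈ S := hScomp.sSup_mem hSne
  have hs₀0 : 0 ≤ s₀ := hs₀S.1.1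
  have hs₀t : s₀ ≤ t₀ := hs₀S.1.2
  -- on (s₀, t₀], h > K + φ
  have hgt : ∀ τ : ℝ, s₀ < τ → τ ≤ t₀ → K + φ τ < h τ := by
    intro τ hτ1 hτ2
    by_contra hle
    push_neg at hle
    have : τ ∈ S := ⟨⟨le_trans hs₀0 hτ1.le, hτ2⟩, by simp only [Set.mem_setOf_eq]; linarith⟩
    exact absurd (le_csSup hScomp.bddAbove this) (not_le.2 hτ1)
  -- a.e. bound on Ioc s₀ t₀
  have hae : ∀ᵐ τ ∂(volume.restrict (Set.Ioc s₀ t₀)), h' τ ≤ -C₁ * φ τ ^ β := by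
    have hsub : Set.Ioc s₀ t₀ ⊆ Set.Ioi (0:ℝ) := fun τ hτ => lt_of_le_of_lt hs₀0 hτ.1
    have h1 : ∀ᵐ τ ∂(volume.restrict (Set.Ioc s₀ t₀)),
        h' τ + C₁ * min (h τ ^ α) (h τ ^ β) ≤ C₂ :=
      ae_restrict_of_ae_restrict_of_subset hsub hineq
    filter_upwards [h1, ae_restrict_mem measurableSet_Ioc] with τ hineqτ hτ
    have hτ0 : (0:ℝ) ≤ τ := le_trans hs₀0 hτ.1.le
    have hφτ : 0 < φ τ := hφpos τ hτ0
    have hhτ : K + φ τ < h τ := hgt τ hτ.1 hτ.2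
    have hh1 : (1:ℝ) ≤ h τ := by linarith
    have hmin : min (h τ ^ α) (h τ ^ β) = h τ ^ β :=
      min_eq_right (Real.rpow_le_rpow_of_exponent_le hh1 hαβ)
    rw [hmin] at hineqτ
    -- C₂ + C₁ (h-K)^β ≤ C₁ h^β
    have hsup : K ^ β + (h τ - K) ^ β ≤ h τ ^ β := by
      have := aux_superadd (a := K) (b := h τ - K) (by linarith) (by linarith) hβ.le
      have he : K + (h τ - K) = h τ := by ring
      rwa [he] at this
    have hC₂ : C₂ = C₁ * K ^ β := by
      rw [hKβ]; field_simp
    have hφle : φ τ ^ β ≤ (h τ - K) ^ β :=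
      Real.rpow_le_rpow hφτ.le (by linarith) hβ0.le
    nlinarith [mul_le_mul_of_nonneg_left hsup hC₁.le,
      mul_le_mul_of_nonneg_left hφle hC₁.le]
  -- integral comparison
  have hint1 : IntervalIntegrable h' volume s₀ t₀ := hInt s₀ t₀ hs₀0 hs₀t
  have hcontφ' : ContinuousOn (fun τ => -C₁ * φ τ ^ β) (Set.Icc s₀ t₀) := by
    apply ContinuousOn.mul continuousOn_const
    apply ContinuousOn.rpow_const
    · exact hcontφ.mono (Set.Icc_subset_Icc hs₀0 le_rfl)
    · intro x hx
      exact Or.inl (ne_of_gt (hφpos x (le_trans hs₀0 hx.1)))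
  have hint2 : IntervalIntegrable (fun τ => -C₁ * φ τ ^ β) volume s₀ t₀ :=
    (hcontφ'.intervalIntegrable_of_Icc hs₀t)
  have hmono : (∫ τ in s₀..t₀, h' τ) ≤ ∫ τ in s₀..t₀, -C₁ * φ τ ^ β := by
    rw [intervalIntegral.integral_of_le hs₀t, intervalIntegral.integral_of_le hs₀t]
    apply setIntegral_mono_ae_restrict hint1.1
      (hcontφ'.integrableOn_Icc.mono_set Set.Ioc_subset_Icc_self) hae
  have hφFTC : (∫ τ in s₀..t₀, -C₁ * φ τ ^ β) = φ t₀ - φ s₀ := by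
    apply intervalIntegral.integral_eq_sub_of_hasDerivAt
    · intro x hx
      rw [Set.uIcc_of_le hs₀t] at hx
      exact hφderiv x (le_trans hs₀0 hx.1)
    · exact hint2
  have hFTC1 := hFTC s₀ t₀ hs₀0 hs₀t
  have hs₀ineq : h s₀ - φ s₀ ≤ K := hs₀S.2
  have : h t₀ ≤ K + φ t₀ := by linarith [hmono, hφFTC, hFTC1]
  exact absurd hcon (not_lt.2 this)
end

section
/- Let α ≥ β with 0 < β ≤ 1, C₂ ≥ C₁ > 0, and let h : [0,∞) → ℝ be a nonnegative absolutely continuous function satisfying h'(t) + C₁·min(h(t)^α, h(t)^β) ≤ C₂ for a.e. t > 0. If h(0) > (C₂/C₁)^{1/β}, then for all t ≥ 0, h(t) ≤ (C₂/C₁)·h(0)^{1−β} + h(0)·(1 − (C₂/C₁)·h(0)^{−β})·exp(−C₁ h(0)^{β−1} t). -/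
/-!
Set `K = C₂/C₁`, `M = h 0`, `A = K M^{1-β}` and `λ = C₁ M^{β-1}`, so that `λ A = C₂`. The right-hand
side is the solution `G = A + (M - A) e^{-λt}` of `G' = C₂ - λ G`, with `1 ≤ A ≤ G ≤ M`. Wherever
`h` rises above `G` we have `h ≥ 1`, so the minimum is `h^β`, and `h^β ≥ G^β = G^{β-1} G ≥ M^{β-1} G`;
hence `h' ≤ C₂ - λ G = G'` there, and a first-crossing argument keeps `h` below `G`.
-/

open MeasureTheory Set Real

theorem nonpos_of_ae_deriv_nonpos_of_pos {f f' : ℝ → ℝ} {a b : ℝ} (hab : a ≤ b)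
    (hf : ∀ t ∈ Icc a b, f t = f a + ∫ τ in a..t, f' τ)
    (hf' : IntervalIntegrable f' volume a b) (ha : f a ≤ 0)
    (hderiv : ∀ᵐ τ ∂volume.restrict (Ioo a b), 0 < f τ → f' τ ≤ 0) :
    f b ≤ 0 := by
  have hcont : ContinuousOn f (Icc a b) := by
    have := (intervalIntegral.continuousOn_primitive_interval' hf' left_mem_uIcc).const_add (f a)
    rw [uIcc_of_le hab] at this
    exact this.congr hf
  by_contra! hb
  set S := {s ∈ Icc a b | f s ≤ 0}
  have hSbdd : BddAbove S := ⟨b, fun x hx => hx.1.2⟩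
  have hc : sSup S ∈ S :=
    (hcont.preimage_isClosed_of_isClosed isClosed_Icc isClosed_Iic).csSup_mem
      ⟨a, left_mem_Icc.2 hab, ha⟩ hSbdd
  set c := sSup S
  have hcb : c < b := lt_of_le_of_ne hc.1.2 fun hcb => by linarith [hcb ▸ hc.2]
  have hpos : ∀ s ∈ Ioo c b, 0 < f s := fun s hs => by
    by_contra! hfs
    exact (le_csSup hSbdd ⟨⟨hc.1.1.trans hs.1.le, hs.2.le⟩, hfs⟩).not_gt hs.1
  have hint : 0 ≤ ∫ τ in c..b, -f' τ := by
    refine intervalIntegral.integral_nonneg_of_ae_restrict hcb.le ?_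
    rw [← Measure.restrict_congr_set Ioo_ae_eq_Icc]
    filter_upwards [ae_restrict_of_ae_restrict_of_subset (Ioo_subset_Ioo_left hc.1.1) hderiv,
      ae_restrict_mem measurableSet_Ioo] with τ hτ hτc
    exact neg_nonneg.2 (hτ (hpos τ hτc))
  have hcb_int : ∫ τ in c..b, f' τ = f b - f c := by
    rw [hf b (right_mem_Icc.2 hab), hf c hc.1, ← intervalIntegral.integral_interval_sub_left hf'
      (hf'.mono_set (uIcc_subset_uIcc left_mem_uIcc (by simp [uIcc_of_le hab, hc.1.1, hc.1.2])))]
    ring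
  rw [intervalIntegral.integral_neg] at hint
  linarith [hc.2]

theorem le_of_ae_deriv_le_of_lt {h h' g g' : ℝ → ℝ} {a b : ℝ} (hab : a ≤ b)
    (hh : ∀ t ∈ Icc a b, h t = h a + ∫ τ in a..t, h' τ)
    (hh' : IntervalIntegrable h' volume a b)
    (hg : ∀ τ ∈ Icc a b, HasDerivAt g (g' τ) τ) (hg' : IntervalIntegrable g' volume a b)
    (ha : h a ≤ g a) (hderiv : ∀ᵐ τ ∂volume.restrict (Ioo a b), g τ < h τ → h' τ ≤ g' τ) :
    h b ≤ g b := by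
  have hsub : ∀ t ∈ Icc a b, uIcc a t ⊆ Icc a b := fun t ht => by
    rw [uIcc_of_le ht.1]; exact Icc_subset_Icc_right ht.2
  have hgt : ∀ t ∈ Icc a b, g t = g a + ∫ τ in a..t, g' τ := fun t ht => by
    rw [intervalIntegral.integral_eq_sub_of_hasDerivAt (fun τ hτ => hg τ (hsub t ht hτ))
      (hg'.mono_set (by rw [uIcc_of_le hab]; exact hsub t ht))]
    ring
  have := nonpos_of_ae_deriv_nonpos_of_pos (f := h - g) (f' := h' - g') hab
    (fun t ht => by
      simp only [Pi.sub_apply]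
      rw [intervalIntegral.integral_sub (hh'.mono_set ?_) (hg'.mono_set ?_), hh t ht, hgt t ht]
      · ring
      all_goals rw [uIcc_of_le hab]; exact hsub t ht)
    (hh'.sub hg') (sub_nonpos.2 ha)
    (by filter_upwards [hderiv] with τ hτ hpos using sub_nonpos.2 (hτ (sub_pos.1 hpos)))
  exact sub_nonpos.1 this

theorem rpow_sub_one_mul_le_rpow {β M x y : ℝ} (hβ0 : 0 ≤ β) (hβ1 : β ≤ 1) (hx : 0 < x)
    (hxM : x ≤ M) (hxy : x ≤ y) : M ^ (β - 1) * x ≤ y ^ β :=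
  calc M ^ (β - 1) * x ≤ x ^ (β - 1) * x :=
        mul_le_mul_of_nonneg_right (rpow_le_rpow_of_nonpos hx hxM (by linarith)) hx.le
    _ = x ^ β := by rw [rpow_sub_one hx.ne', div_mul_cancel₀ _ hx.ne']
    _ ≤ y ^ β := rpow_le_rpow hx.le hxy hβ0

theorem le_sub_mul_of_add_mul_min_rpow_le {α β C₁ C₂ M x y d : ℝ} (hβ0 : 0 ≤ β) (hβ1 : β ≤ 1)
    (hαβ : β ≤ α) (hC₁ : 0 ≤ C₁) (hx : 1 ≤ x) (hxM : x ≤ M) (hxy : x ≤ y)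
    (hd : d + C₁ * min (y ^ α) (y ^ β) ≤ C₂) : d ≤ C₂ - C₁ * M ^ (β - 1) * x := by
  rw [min_eq_right (rpow_le_rpow_of_exponent_le (hx.trans hxy) hαβ)] at hd
  have := mul_le_mul_of_nonneg_left (rpow_sub_one_mul_le_rpow hβ0 hβ1 (by linarith) hxM hxy) hC₁
  linarith [mul_assoc C₁ (M ^ (β - 1)) x]

theorem mul_rpow_one_sub_mem_Icc {β K M : ℝ} (hβ0 : 0 < β) (hβ1 : β ≤ 1) (hK : 1 ≤ K)
    (hKM : K ^ (1 / β) < M) : K * M ^ (1 - β) ∈ Icc 1 M := by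
  have hM : 1 < M := (one_le_rpow hK (by positivity)).trans_lt hKM
  rw [one_div, rpow_inv_lt_iff_of_pos (by linarith) (by linarith) hβ0] at hKM
  refine ⟨one_le_mul_of_one_le_of_one_le hK (one_le_rpow hM.le (by linarith)), ?_⟩
  calc K * M ^ (1 - β) ≤ M ^ β * M ^ (1 - β) := by gcongr
    _ = M := by rw [← rpow_add (by linarith), add_sub_cancel, rpow_one]

theorem add_mul_exp_neg_mul_mem_Icc {A B k τ : ℝ} (hB : 0 ≤ B) (hk : 0 ≤ k) (hτ : 0 ≤ τ) :
    A + B * exp (-k * τ) ∈ Icc A (A + B) := by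
  have : exp (-k * τ) ≤ 1 := exp_le_one_iff.2 (by nlinarith)
  constructor <;> nlinarith [exp_pos (-k * τ)]

theorem stmt_2_general (α β C₁ C₂ : ℝ) (hβ0 : 0 < β) (hβ1 : β ≤ 1) (hαβ : β ≤ α)
    (hC₁ : 0 < C₁) (hC : C₁ ≤ C₂)
    (h h' : ℝ → ℝ)
    (hFTC : ∀ s t : ℝ, 0 ≤ s → s ≤ t → h t - h s = ∫ τ in s..t, h' τ)
    (hInt : ∀ s t : ℝ, 0 ≤ s → s ≤ t → IntervalIntegrable h' volume s t)
    (hineq : ∀ᵐ t ∂(volume.restrict (Set.Ioi (0:ℝ))),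
      h' t + C₁ * min (h t ^ α) (h t ^ β) ≤ C₂)
    (h0 : (C₂ / C₁) ^ (1 / β) < h 0) :
    ∀ t : ℝ, 0 ≤ t →
      h t ≤ (C₂ / C₁) * h 0 ^ (1 - β) +
        h 0 * (1 - (C₂ / C₁) * h 0 ^ (-β)) * Real.exp (-C₁ * h 0 ^ (β - 1) * t) := by
  intro t ht
  set K := C₂ / C₁
  set M := h 0
  set A := K * M ^ (1 - β)
  obtain ⟨hA1, hAM⟩ : A ∈ Icc 1 M :=
    mul_rpow_one_sub_mem_Icc hβ0 hβ1 ((one_le_div hC₁).2 hC) h0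
  have hM : 0 < M := by linarith
  have hB : M * (1 - K * M ^ (-β)) = M - A := by
    change _ = M - K * M ^ (1 - β)
    rw [rpow_neg hM.le, rpow_sub hM, rpow_one]; field_simp
  have hC₂ : C₁ * M ^ (β - 1) * A = C₂ := by
    change C₁ * M ^ (β - 1) * (C₂ / C₁ * M ^ (1 - β)) = C₂
    rw [show 1 - β = -(β - 1) by ring, rpow_neg hM.le]; field_simp
  set G : ℝ → ℝ := fun τ => A + (M - A) * exp (-C₁ * M ^ (β - 1) * τ)
  have hG : ∀ τ, HasDerivAt G (C₂ - C₁ * M ^ (β - 1) * G τ) τ := fun τ =>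
    ((((hasDerivAt_id τ).const_mul _).exp).const_mul (M - A) |>.const_add A).congr_deriv
      (by simp only [G, id, ← hC₂]; ring)
  have hGc : Continuous G := continuous_iff_continuousAt.2 fun τ => (hG τ).continuousAt
  rw [hB]
  refine le_of_ae_deriv_le_of_lt ht (fun s hs => by linarith [hFTC 0 s le_rfl hs.1])
    (hInt 0 t le_rfl ht) (fun τ _ => hG τ)
    ((continuous_const.sub (continuous_const.mul hGc)).intervalIntegrable _ _)
    (by simp [G, M]) ?_
  filter_upwards [ae_restrict_of_ae_restrict_of_subset Ioo_subset_Ioi_self hineq,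
    ae_restrict_mem measurableSet_Ioo] with τ hτ hτt hGh
  obtain ⟨hGA, hGM⟩ := add_mul_exp_neg_mul_mem_Icc (A := A) (sub_nonneg.2 hAM)
    (by positivity : 0 ≤ C₁ * M ^ (β - 1)) hτt.1.le
  rw [← neg_mul] at hGA hGM
  rw [add_sub_cancel] at hGM
  exact le_sub_mul_of_add_mul_min_rpow_le hβ0.le hβ1 hαβ hC₁.le (hA1.trans hGA) hGM hGh.le hτ

/-- Lemma 5.1(2), case `0 < β ≤ 1`: exponential estimate when `h 0 > (C₂/C₁)^(1/β)`. -/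
theorem stmt_2 (α β C₁ C₂ : ℝ) (hβ0 : 0 < β) (hβ1 : β ≤ 1) (hαβ : β ≤ α)
    (hC₁ : 0 < C₁) (hC : C₁ ≤ C₂)
    (h h' : ℝ → ℝ)
    (hnn : ∀ t : ℝ, 0 ≤ t → 0 ≤ h t)
    (hFTC : ∀ s t : ℝ, 0 ≤ s → s ≤ t → h t - h s = ∫ τ in s..t, h' τ)
    (hInt : ∀ s t : ℝ, 0 ≤ s → s ≤ t → IntervalIntegrable h' volume s t)
    (hineq : ∀ᵐ t ∂(volume.restrict (Set.Ioi (0:ℝ))),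
      h' t + C₁ * min (h t ^ α) (h t ^ β) ≤ C₂)
    (h0 : (C₂ / C₁) ^ (1 / β) < h 0) :
    ∀ t : ℝ, 0 ≤ t →
      h t ≤ (C₂ / C₁) * h 0 ^ (1 - β) +
        h 0 * (1 - (C₂ / C₁) * h 0 ^ (-β)) * Real.exp (-C₁ * h 0 ^ (β - 1) * t) :=
  stmt_2_general α β C₁ C₂ hβ0 hβ1 hαβ hC₁ hC h h' hFTC hInt hineq h0
end

section
/- Let α ≥ β > 0, C₁ > C₂ > 0, and let h : [0,∞) → ℝ be a nonnegative absolutely continuous function satisfying h'(t) + C₁·min(h(t)^α, h(t)^β) ≤ C₂ for a.e. t > 0. If h(0) ≤ (C₂/C₁)^{1/α}, then h(t) ≤ (C₂/C₁)^{1/α} for all t ≥ 0. -/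
/-!
Let `M = (C₂/C₁)^(1/α)`. Since `C₂/C₁ < 1` and `β ≤ α`, every `x ≥ M` satisfies
`C₁ min(x^α, x^β) ≥ C₂`, so the differential inequality forces `h' ≤ 0` a.e. wherever `h > M`.
If `h t > M`, let `s` be the last time in `[0, t]` with `h s ≤ M`; on `(s, t]` we have `h > M`,
hence `h t - h s = ∫ₛᵗ h' ≤ 0`, a contradiction.
-/

open MeasureTheory Set

namespace Real

theorem le_min_rpow_of_rpow_inv_le {α β c x : ℝ} (hβ : 0 < β) (hβα : β ≤ α)
    (hc₀ : 0 ≤ c) (hc₁ : c ≤ 1) (hx : c ^ α⁻¹ ≤ x) : c ≤ min (x ^ α) (x ^ β) := by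
  have hα : 0 < α := hβ.trans_le hβα
  have hx₀ : 0 ≤ x := (rpow_nonneg hc₀ _).trans hx
  rcases le_or_gt x 1 with hx₁ | hx₁
  · have hcα : c ≤ x ^ α :=
      calc c = (c ^ α⁻¹) ^ α := (rpow_inv_rpow hc₀ hα.ne').symm
        _ ≤ x ^ α := rpow_le_rpow (rpow_nonneg hc₀ _) hx hα.le
    exact le_min hcα (hcα.trans (rpow_le_rpow_of_exponent_ge' hx₀ hx₁ hβ.le hβα))
  · exact le_min (hc₁.trans (one_le_rpow hx₁.le hα.le)) (hc₁.trans (one_le_rpow hx₁.le hβ.le))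

end Real

section Barrier

variable {h h' : ℝ → ℝ} {a b M : ℝ}

theorem continuousOn_Icc_of_sub_eq_integral (hab : a ≤ b)
    (hint : IntervalIntegrable h' volume a b)
    (hFTC : ∀ x ∈ Icc a b, h x - h a = ∫ τ in a..x, h' τ) : ContinuousOn h (Icc a b) := by
  have hprim : ContinuousOn (fun x ↦ h a + ∫ τ in a..x, h' τ) (Icc a b) := by
    rw [← uIcc_of_le hab]
    exact continuousOn_const.add
      (intervalIntegral.continuousOn_primitive_interval' hint left_mem_uIcc)
  exact hprim.congr fun x hx ↦ by linarith [hFTC x hx]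

theorem exists_last_le_of_continuousOn (hab : a ≤ b) (hcont : ContinuousOn h (Icc a b))
    (ha : h a ≤ M) : ∃ s ∈ Icc a b, h s ≤ M ∧ ∀ τ ∈ Ioc s b, M < h τ := by
  set S := Icc a b ∩ h ⁻¹' Iic M
  have hS : IsCompact S :=
    isCompact_Icc.of_isClosed_subset
      (hcont.preimage_isClosed_of_isClosed isClosed_Icc isClosed_Iic) inter_subset_left
  have hsS : sSup S ∈ S := hS.sSup_mem ⟨a, ⟨le_rfl, hab⟩, ha⟩
  refine ⟨sSup S, hsS.1, hsS.2, fun τ hτ ↦ lt_of_not_ge fun hτM ↦ ?_⟩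
  have hτS : τ ∈ S := ⟨⟨hsS.1.1.trans hτ.1.le, hτ.2⟩, hτM⟩
  exact (le_csSup hS.bddAbove hτS).not_gt hτ.1

theorem le_of_integral_deriv_nonpos_above (hab : a ≤ b) (hcont : ContinuousOn h (Icc a b))
    (hFTC : ∀ s ∈ Icc a b, h b - h s = ∫ τ in s..b, h' τ)
    (hderiv : ∀ᵐ τ ∂volume.restrict (Ioc a b), M < h τ → h' τ ≤ 0)
    (ha : h a ≤ M) : h b ≤ M := by
  obtain ⟨s, hs, hsM, habove⟩ := exists_last_le_of_continuousOn hab hcont ha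
  have hderiv_s : ∀ᵐ τ ∂volume.restrict (Ioc s b), h' τ ≤ 0 := by
    filter_upwards [ae_restrict_of_ae_restrict_of_subset (Ioc_subset_Ioc_left hs.1) hderiv,
      ae_restrict_mem measurableSet_Ioc] with τ hτ hτs
    exact hτ (habove τ hτs)
  have hint : ∫ τ in s..b, h' τ ≤ 0 := by
    rw [intervalIntegral.integral_of_le hs.2]
    exact integral_nonpos_of_ae hderiv_s
  linarith [hFTC s hs]

end Barrier

theorem stmt_3_general (α β C₁ C₂ : ℝ) (hβ : 0 < β) (hαβ : β ≤ α)
    (hC₂ : 0 < C₂) (hC : C₂ < C₁)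
    (h h' : ℝ → ℝ)
    (hFTC : ∀ s t : ℝ, 0 ≤ s → s ≤ t → h t - h s = ∫ τ in s..t, h' τ)
    (hInt : ∀ s t : ℝ, 0 ≤ s → s ≤ t → IntervalIntegrable h' volume s t)
    (hineq : ∀ᵐ t ∂(volume.restrict (Set.Ioi (0:ℝ))),
      h' t + C₁ * min (h t ^ α) (h t ^ β) ≤ C₂)
    (h0 : h 0 ≤ (C₂ / C₁) ^ (1 / α)) :
    ∀ t : ℝ, 0 ≤ t → h t ≤ (C₂ / C₁) ^ (1 / α) := by
  intro t ht
  have hC₁ : 0 < C₁ := hC₂.trans hC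
  have hderiv : ∀ᵐ τ ∂volume.restrict (Ioc 0 t),
      (C₂ / C₁) ^ (1 / α) < h τ → h' τ ≤ 0 := by
    filter_upwards [ae_restrict_of_ae_restrict_of_subset Ioc_subset_Ioi_self hineq]
      with τ hτ hτM
    have hmin : C₂ / C₁ ≤ min (h τ ^ α) (h τ ^ β) := by
      refine Real.le_min_rpow_of_rpow_inv_le hβ hαβ (div_pos hC₂ hC₁).le
        ((div_lt_one hC₁).mpr hC).le ?_
      simpa only [one_div] using hτM.le
    rw [div_le_iff₀ hC₁] at hmin
    linarith
  refine le_of_integral_deriv_nonpos_above ht ?_ (fun s hs ↦ hFTC s t hs.1 hs.2) hderiv h0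
  exact continuousOn_Icc_of_sub_eq_integral ht (hInt 0 t le_rfl ht)
    (fun x hx ↦ hFTC 0 x le_rfl hx.1)

/-- Lemma 5.2(1): if `C₁ > C₂ > 0` and `h 0 ≤ (C₂/C₁)^(1/α)`,
then `h t ≤ (C₂/C₁)^(1/α)` for all `t ≥ 0`. -/
theorem stmt_3 (α β C₁ C₂ : ℝ) (hβ : 0 < β) (hαβ : β ≤ α)
    (hC₂ : 0 < C₂) (hC : C₂ < C₁)
    (h h' : ℝ → ℝ)
    (hnn : ∀ t : ℝ, 0 ≤ t → 0 ≤ h t)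
    (hFTC : ∀ s t : ℝ, 0 ≤ s → s ≤ t → h t - h s = ∫ τ in s..t, h' τ)
    (hInt : ∀ s t : ℝ, 0 ≤ s → s ≤ t → IntervalIntegrable h' volume s t)
    (hineq : ∀ᵐ t ∂(volume.restrict (Set.Ioi (0:ℝ))),
      h' t + C₁ * min (h t ^ α) (h t ^ β) ≤ C₂)
    (h0 : h 0 ≤ (C₂ / C₁) ^ (1 / α)) :
    ∀ t : ℝ, 0 ≤ t → h t ≤ (C₂ / C₁) ^ (1 / α) :=
  stmt_3_general α β C₁ C₂ hβ hαβ hC₂ hC h h' hFTC hInt hineq h0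
end

section
/- Let α ≥ β > 0 and C₂ ≥ C₁ > 0, and let h : [0,∞) → ℝ be a nonnegative absolutely continuous function satisfying h'(t) + C₁·min(h(t)^α, h(t)^β) ≤ C₂ for a.e. t. If h(0) > (C₂/C₁)^{1/β}, then h(t) ≤ h(0) for all t ≥ 0. -/
open MeasureTheory

/-- If `h 0 > (C₂/C₁)^(1/β)` then `h t ≤ h 0` for all `t ≥ 0`. -/
theorem stmt_5 (α β C₁ C₂ : ℝ) (hβ : 0 < β) (hαβ : β ≤ α)
    (hC₁ : 0 < C₁) (hC : C₁ ≤ C₂)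
    (h h' : ℝ → ℝ)
    (hnn : ∀ t : ℝ, 0 ≤ t → 0 ≤ h t)
    (hFTC : ∀ s t : ℝ, 0 ≤ s → s ≤ t → h t - h s = ∫ τ in s..t, h' τ)
    (hInt : ∀ s t : ℝ, 0 ≤ s → s ≤ t → IntervalIntegrable h' volume s t)
    (hineq : ∀ᵐ t ∂(volume.restrict (Set.Ioi (0:ℝ))),
      h' t + C₁ * min (h t ^ α) (h t ^ β) ≤ C₂)
    (h0 : (C₂ / C₁) ^ (1 / β) < h 0) :
    ∀ t : ℝ, 0 ≤ t → h t ≤ h 0 := by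
  intro t ht
  by_contra hcon
  push_neg at hcon
  set M : ℝ := (C₂ / C₁) ^ (1 / β) with hMdef
  have hratio : (1:ℝ) ≤ C₂ / C₁ := (one_le_div hC₁).mpr hC
  have hM1 : (1:ℝ) ≤ M := Real.one_le_rpow hratio (by positivity)
  have htpos : 0 < t := by
    rcases ht.lt_or_eq with h1 | h1
    · exact h1
    · rw [← h1] at hcon; exact absurd hcon (lt_irrefl _)
  -- continuity of h on [0, t]
  have hIcc : Set.uIcc (0:ℝ) t = Set.Icc 0 t := Set.uIcc_of_le ht
  have hint0t : IntegrableOn h' (Set.uIcc 0 t) volume := by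
    rw [hIcc]
    exact (intervalIntegrable_iff_integrableOn_Icc_of_le ht).mp (hInt 0 t le_rfl ht)
  have hcontg : ContinuousOn (fun x => ∫ τ in (0:ℝ)..x, h' τ) (Set.Icc 0 t) := by
    rw [← hIcc]; exact intervalIntegral.continuousOn_primitive_interval hint0t
  have hcont : ContinuousOn h (Set.Icc 0 t) := by
    have : ContinuousOn (fun x => h 0 + ∫ τ in (0:ℝ)..x, h' τ) (Set.Icc 0 t) :=
      continuousOn_const.add hcontg
    refine this.congr fun x hx => ?_
    have := hFTC 0 x le_rfl hx.1
    linarith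
  -- the set where h ≤ h 0
  set S : Set ℝ := Set.Icc 0 t ∩ h ⁻¹' Set.Iic (h 0) with hSdef
  have hSclosed : IsClosed S := hcont.preimage_isClosed_of_isClosed isClosed_Icc isClosed_Iic
  have hSne : S.Nonempty := ⟨0, ⟨le_rfl, ht⟩, show h 0 ≤ h 0 from le_rfl⟩
  have hSbdd : BddAbove S := ⟨t, fun x hx => hx.1.2⟩
  set s : ℝ := sSup S with hsdef
  have hsS : s ∈ S := hSclosed.csSup_mem hSne hSbdd
  have hs0 : 0 ≤ s := hsS.1.1
  have hst : s ≤ t := hsS.1.2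
  have hshle : h s ≤ h 0 := hsS.2
  -- points in (s, t] have h u > h 0 > M
  have hgt : ∀ u ∈ Set.Ioc s t, M < h u := by
    intro u hu
    by_contra hle
    push_neg at hle
    have huS : u ∈ S := by
      constructor
      · exact ⟨hs0.trans hu.1.le, hu.2⟩
      · by_contra hnot
        have hlt : h 0 < h u := not_le.mp hnot
        exact absurd (h0.trans hlt) (not_lt.mpr hle)
    exact absurd (le_csSup hSbdd huS) (not_le.mpr hu.1)
  -- a.e. on Ioc s t, h' ≤ 0
  have hsub : Set.Ioc s t ⊆ Set.Ioi (0:ℝ) := fun u hu => lt_of_le_of_lt hs0 hu.1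
  have hae1 : ∀ᵐ u ∂(volume.restrict (Set.Ioc s t)),
      h' u + C₁ * min (h u ^ α) (h u ^ β) ≤ C₂ :=
    ae_restrict_of_ae_restrict_of_subset hsub hineq
  have hae2 : ∀ᵐ u ∂(volume.restrict (Set.Ioc s t)), u ∈ Set.Ioc s t :=
    ae_restrict_mem measurableSet_Ioc
  have haeneg : ∀ᵐ u ∂(volume.restrict (Set.Ioc s t)), h' u ≤ 0 := by
    filter_upwards [hae1, hae2] with u h1 h2
    have hMu : M ≤ h u := (hgt u h2).le
    have h1u : (1:ℝ) ≤ h u := hM1.trans hMu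
    have hmin : min (h u ^ α) (h u ^ β) = h u ^ β :=
      min_eq_right (Real.rpow_le_rpow_of_exponent_le h1u hαβ)
    have hMb : M ^ β ≤ h u ^ β :=
      Real.rpow_le_rpow (by linarith) hMu hβ.le
    have hMbeq : M ^ β = C₂ / C₁ := by
      rw [hMdef, ← Real.rpow_mul (by positivity), one_div,
        inv_mul_cancel₀ hβ.ne', Real.rpow_one]
    have hC2le : C₂ ≤ C₁ * (h u ^ β) := by
      rw [hMbeq] at hMb
      calc C₂ = C₁ * (C₂ / C₁) := by field_simp
        _ ≤ C₁ * (h u ^ β) := by nlinarith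
    rw [hmin] at h1
    linarith
  -- conclude
  have hint : h t - h s = ∫ τ in s..t, h' τ := hFTC s t hs0 hst
  have hle : (∫ τ in s..t, h' τ) ≤ 0 := by
    rw [intervalIntegral.integral_of_le hst]
    exact integral_nonpos_of_ae haeneg
  linarith
end

section
/- Define on the ball B₃ = {X ∈ ℝ³ : |X| ≤ 3} the exponent p(X) = 3/2 + |X| for |X| ≤ 1, p(X) = 5/2 for 1 ≤ |X| ≤ 2, p(X) = 9/2 − |X| for 2 ≤ |X| ≤ 3, and the function u(X) = 3/4 − |X| for |X| ≤ 1, u(X) = −1/4 for 1 ≤ |X| ≤ 2, u(X) = (104|X| − 251)/172 for 2 ≤ |X| ≤ 3, and for ε > 0 set v_ε = ε u. Then ∫_{B₃} |∇v_ε|^{p(X)} dX ≤ 40π ε^{3/2}(ε−1)/ln ε for ε > 1 and ∫_{B₃} |v_ε|^{p(X)} dX ≥ (7π/24) ε^{5/2}, hence the quotient (∫|∇v_ε|^{p(X)})/(∫|v_ε|^{p(X)}) ≤ 960(ε−1)/(7ε ln ε) → 0 as ε → ∞; consequently inf over nonzero u ∈ V(B₃) of ∫|∇u|^{p(X)}/∫|u|^{p(X)}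 equals 0, i.e. the modular Poincaré inequality fails for variable exponents. -/
open MeasureTheory Real

noncomputable section

/-- The variable exponent `p` on the ball `B₃ ⊂ ℝ³`. -/
def pexp (X : EuclideanSpace ℝ (Fin 3)) : ℝ :=
  if ‖X‖ ≤ 1 then 3 / 2 + ‖X‖ else if ‖X‖ ≤ 2 then 5 / 2 else 9 / 2 - ‖X‖

/-- The Lipschitz test function `u` on `B₃`. -/
def utest (X : EuclideanSpace ℝ (Fin 3)) : ℝ :=
  if ‖X‖ ≤ 1 then 3 / 4 - ‖X‖
  else if ‖X‖ ≤ 2 then -(1 / 4)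
  else (104 * ‖X‖ - 251) / 172

/-!
On the annulus `1 < |X| < 2` the function `v_ε = ε u` is the constant `-ε/4` and `p = 5/2`, so
`∫ |v_ε|^p ≥ (ε/4)^{5/2} · vol(annulus)`. Its gradient vanishes there, and elsewhere
`|∇v_ε| ≤ ε` while `p` drops linearly away from the annulus, so in polar coordinates
`∫ |∇v_ε|^p` is bounded by integrals of `ε^{3/2 + r}` and `ε^{9/2 - r}` over unit intervals,
i.e. by `ε^{5/2}/log ε` up to constants. The quotient therefore decays like `1/log ε`, while
each `v_ε` is Lipschitz with mean zero, which rules out a modular Poincaré constant.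
-/

open Set Filter Topology Metric

local notation "ℝ³" => EuclideanSpace ℝ (Fin 3)

section Radial

variable {E F : Type*} [NormedAddCommGroup E] [NormedSpace ℝ E] [FiniteDimensional ℝ E]
  [Nontrivial E] [MeasurableSpace E] [BorelSpace E] [NormedAddCommGroup F] [NormedSpace ℝ F]

theorem setIntegral_closedBall_fun_norm (μ : Measure E) [μ.IsAddHaarMeasure] (f : ℝ → F)
    {R : ℝ} (hR : 0 ≤ R) :
    ∫ x in closedBall (0 : E) R, f ‖x‖ ∂μ =
      Module.finrank ℝ E • μ.real (ball 0 1) •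
        ∫ r in 0..R, r ^ (Module.finrank ℝ E - 1) • f r := by
  have hind : (closedBall (0 : E) R).indicator (fun x => f ‖x‖) =
      fun x => (Iic R).indicator f ‖x‖ := by
    ext x
    simp [indicator]
  rw [← integral_indicator measurableSet_closedBall, hind, integral_fun_norm_addHaar,
    intervalIntegral.integral_of_le hR, ← Ioi_inter_Iic, ← setIntegral_indicator measurableSet_Iic]
  simp_rw [indicator_smul_apply]

end Radial

theorem setIntegral_closedBall_fun_norm_euclideanSpace_three (f : ℝ → ℝ) {R : ℝ} (hR : 0 ≤ R) :
    ∫ X in closedBall (0 : ℝ³) R, f ‖X‖ = 4 * π * ∫ r in 0..R, r ^ 2 * f r := by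
  rw [setIntegral_closedBall_fun_norm volume f hR, finrank_euclideanSpace_fin, measureReal_def,
    EuclideanSpace.volume_ball_fin_three]
  simp [ENNReal.toReal_ofReal (by positivity : (0:ℝ) ≤ π * 4 / 3)]
  ring

theorem integral_eq_add_add_of_eqOn_Ioo {F : Type*} [NormedAddCommGroup F] [NormedSpace ℝ F]
    {f g₁ g₂ g₃ : ℝ → F} {a b c d : ℝ} (hab : a ≤ b) (hbc : b ≤ c) (hcd : c ≤ d)
    (h₁ : EqOn f g₁ (Ioo a b)) (h₂ : EqOn f g₂ (Ioo b c)) (h₃ : EqOn f g₃ (Ioo c d))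
    (hg₁ : IntervalIntegrable g₁ volume a b) (hg₂ : IntervalIntegrable g₂ volume b c)
    (hg₃ : IntervalIntegrable g₃ volume c d) :
    ∫ x in a..d, f x = (∫ x in a..b, g₁ x) + (∫ x in b..c, g₂ x) + ∫ x in c..d, g₃ x := by
  have hf₁ := hg₁.congr_uIoo (uIoo_of_le hab ▸ h₁.symm)
  have hf₂ := hg₂.congr_uIoo (uIoo_of_le hbc ▸ h₂.symm)
  have hf₃ := hg₃.congr_uIoo (uIoo_of_le hcd ▸ h₃.symm)
  rw [← intervalIntegral.integral_add_adjacent_intervals (hf₁.trans hf₂) hf₃,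
    ← intervalIntegral.integral_add_adjacent_intervals hf₁ hf₂,
    intervalIntegral.integral_congr_Ioo_of_le hab h₁,
    intervalIntegral.integral_congr_Ioo_of_le hbc h₂,
    intervalIntegral.integral_congr_Ioo_of_le hcd h₃]

theorem integral_sq_mul_affine (a b c₀ c₁ : ℝ) :
    ∫ r in a..b, r ^ 2 * (c₀ + c₁ * r) = c₀ * (b ^ 3 - a ^ 3) / 3 + c₁ * (b ^ 4 - a ^ 4) / 4 := by
  have h : (fun r : ℝ => r ^ 2 * (c₀ + c₁ * r)) = fun r => c₀ * r ^ 2 + c₁ * r ^ 3 := by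
    ext r; ring
  rw [h, intervalIntegral.integral_add (Continuous.intervalIntegrable (by fun_prop) _ _)
      (Continuous.intervalIntegrable (by fun_prop) _ _),
    intervalIntegral.integral_const_mul, intervalIntegral.integral_const_mul, integral_pow,
    integral_pow]
  ring

theorem integral_const_rpow {ε : ℝ} (hε : 0 < ε) (hε₁ : ε ≠ 1) (a b : ℝ) :
    ∫ x in a..b, ε ^ x = (ε ^ b - ε ^ a) / log ε := by
  have hlog : log ε ≠ 0 := log_ne_zero_of_pos_of_ne_one hε hε₁
  have hderiv (x : ℝ) : HasDerivAt (fun x => ε ^ x / log ε) (ε ^ x) x := by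
    simpa [hlog] using ((hasStrictDerivAt_const_rpow hε x).hasDerivAt).div_const (log ε)
  rw [intervalIntegral.integral_eq_sub_of_hasDerivAt (fun x _ => hderiv x)
    ((continuous_const_rpow hε.ne').intervalIntegrable a b), sub_div]

theorem integral_sq_mul_le {f : ℝ → ℝ} {a b M : ℝ} (hab : a ≤ b) (hf : Continuous f)
    (hf₀ : ∀ r ∈ Icc a b, 0 ≤ f r) (hM : ∀ r ∈ Icc a b, r ^ 2 ≤ M) :
    ∫ r in a..b, r ^ 2 * f r ≤ M * ∫ r in a..b, f r := by
  rw [← intervalIntegral.integral_const_mul]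
  exact intervalIntegral.integral_mono_on hab (Continuous.intervalIntegrable (by fun_prop) _ _)
    (Continuous.intervalIntegrable (by fun_prop) _ _)
    fun r hr => mul_le_mul_of_nonneg_right (hM r hr) (hf₀ r hr)

theorem eventually_const_mul_lt_of_tendsto_div {α : Type*} {l : Filter α} {N D : α → ℝ}
    (hD : ∀ᶠ x in l, 0 < D x) (h : Tendsto (fun x => N x / D x) l (𝓝 0)) (C : ℝ) :
    ∀ᶠ x in l, C * N x < D x := by
  have hC : Tendsto (fun x => C * (N x / D x)) l (𝓝 0) := by simpa using h.const_mul C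
  filter_upwards [hC.eventually (gt_mem_nhds one_pos), hD] with x hx hDx
  rwa [← mul_div_assoc, div_lt_one hDx] at hx

def pexpProfile (r : ℝ) : ℝ :=
  if r ≤ 1 then 3 / 2 + r else if r ≤ 2 then 5 / 2 else 9 / 2 - r

def utestProfile (r : ℝ) : ℝ :=
  if r ≤ 1 then 3 / 4 - r else if r ≤ 2 then -(1 / 4) else (104 * r - 251) / 172

theorem pexp_eq_pexpProfile (X : ℝ³) : pexp X = pexpProfile ‖X‖ := rfl

theorem utest_eq_utestProfile (X : ℝ³) : utest X = utestProfile ‖X‖ := rfl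

theorem pexpProfile_eq_min (r : ℝ) :
    pexpProfile r = min (3 / 2 + r) (min (5 / 2) (9 / 2 - r)) := by
  unfold pexpProfile
  split_ifs <;> simp only [min_def] <;> split_ifs <;> linarith

theorem utestProfile_eq_max (r : ℝ) :
    utestProfile r = max (3 / 4 - r) (max (-(1 / 4)) ((104 * r - 251) / 172)) := by
  unfold utestProfile
  split_ifs <;> simp only [max_def] <;> split_ifs <;> linarith

@[fun_prop]
theorem continuous_pexpProfile : Continuous pexpProfile := by
  simp only [funext pexpProfile_eq_min]
  fun_prop

@[fun_prop]
theorem continuous_utestProfile : Continuous utestProfile := by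
  simp only [funext utestProfile_eq_max]
  fun_prop

theorem pexpProfile_pos {r : ℝ} (h₀ : 0 ≤ r) (h₃ : r ≤ 3) : 0 < pexpProfile r := by
  rw [pexpProfile_eq_min]
  exact lt_min (by linarith) (lt_min (by norm_num) (by linarith))

theorem lipschitzWith_one_mul_add {a : ℝ} (ha : |a| ≤ 1) (b : ℝ) :
    LipschitzWith 1 fun r : ℝ => a * r + b :=
  LipschitzWith.of_dist_le_mul fun x y => by
    rw [NNReal.coe_one, one_mul, Real.dist_eq, Real.dist_eq, add_sub_add_right_eq_sub, ← mul_sub,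
      abs_mul]
    exact mul_le_of_le_one_left (abs_nonneg _) ha

theorem lipschitzWith_utestProfile : LipschitzWith 1 utestProfile := by
  have h : utestProfile =
      fun r => max (-1 * r + 3 / 4) (max (0 * r + -(1 / 4)) (104 / 172 * r + -251 / 172)) := by
    ext r
    rw [utestProfile_eq_max]
    ring_nf
  rw [h]
  simpa only [max_self] using (lipschitzWith_one_mul_add (a := -1) (by norm_num) _).max
    ((lipschitzWith_one_mul_add (a := 0) (by norm_num) _).max
      (lipschitzWith_one_mul_add (a := 104 / 172) (by norm_num [abs_of_pos]) _))

theorem lipschitzWith_utest : LipschitzWith 1 utest := by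
  have := lipschitzWith_utestProfile.comp (lipschitzWith_one_norm (E := ℝ³))
  rwa [one_mul] at this

theorem lipschitzWith_const_mul_utest (ε : ℝ) : LipschitzWith ‖ε‖₊ fun Y => ε * utest Y := by
  have h := (lipschitzWith_smul ε).comp lipschitzWith_utest
  rwa [mul_one] at h

theorem norm_fderiv_const_mul_utest_le (ε : ℝ) (X : ℝ³) :
    ‖fderiv ℝ (fun Y => ε * utest Y) X‖ ≤ |ε| :=
  norm_fderiv_le_of_lipschitz ℝ (lipschitzWith_const_mul_utest ε)

theorem fderiv_const_mul_utest_of_mem_annulus (ε : ℝ) {X : ℝ³} (hX : ‖X‖ ∈ Ioo 1 2) :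
    fderiv ℝ (fun Y => ε * utest Y) X = 0 := by
  have hconst : (fun Y => ε * utest Y) =ᶠ[𝓝 X] fun _ => ε * -(1 / 4) := by
    filter_upwards [(continuous_norm.tendsto X).eventually (Ioo_mem_nhds hX.1 hX.2)] with Y hY
    rw [utest, if_neg (not_le.mpr hY.1), if_pos hY.2.le]
  rw [hconst.fderiv_eq, fderiv_const_apply]

theorem setIntegral_utest_closedBall : ∫ X in closedBall (0 : ℝ³) 3, utest X = 0 := by
  simp only [utest_eq_utestProfile]
  rw [setIntegral_closedBall_fun_norm_euclideanSpace_three _ (by norm_num),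
    integral_eq_add_add_of_eqOn_Ioo (b := 1) (c := 2) (g₁ := fun r => r ^ 2 * (3 / 4 + -1 * r))
      (g₂ := fun r => r ^ 2 * (-(1 / 4) + 0 * r))
      (g₃ := fun r => r ^ 2 * (-251 / 172 + 104 / 172 * r)) (by norm_num) (by norm_num)
      (by norm_num) ?_ ?_ ?_ (Continuous.intervalIntegrable (by fun_prop) _ _)
      (Continuous.intervalIntegrable (by fun_prop) _ _)
      (Continuous.intervalIntegrable (by fun_prop) _ _),
    integral_sq_mul_affine, integral_sq_mul_affine, integral_sq_mul_affine]
  · norm_num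
  · intro r hr
    simp only [utestProfile, if_pos hr.2.le]
    ring
  · intro r hr
    simp only [utestProfile, if_neg (not_le.mpr hr.1), if_pos hr.2.le]
    ring
  · intro r hr
    simp only [utestProfile, if_neg (not_le.mpr (one_lt_two.trans hr.1)),
      if_neg (not_le.mpr hr.1)]
    ring

def modularScaled (ε : ℝ) : ℝ := ∫ X in closedBall (0 : ℝ³) 3, |ε * utest X| ^ pexp X

def gradModularScaled (ε : ℝ) : ℝ :=
  ∫ X in closedBall (0 : ℝ³) 3, ‖fderiv ℝ (fun Y => ε * utest Y) X‖ ^ pexp X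

theorem four_rpow_five_div_two : (4 : ℝ) ^ (5 / 2 : ℝ) = 32 := by
  rw [show (4 : ℝ) = 2 ^ (2 : ℝ) by norm_num, ← rpow_mul (by norm_num)]
  norm_num

theorem le_integral_sq_mul_abs_const_mul_utestProfile_rpow {ε : ℝ} (hε : 0 ≤ ε) :
    7 / 96 * ε ^ (5 / 2 : ℝ) ≤
      ∫ r in 0..3, r ^ 2 * |ε * utestProfile r| ^ pexpProfile r := by
  have hcont : ContinuousOn (fun r => r ^ 2 * |ε * utestProfile r| ^ pexpProfile r)
      (uIcc 0 3) := by
    refine (continuousOn_pow 2).mul (ContinuousOn.rpow (by fun_prop)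
      continuous_pexpProfile.continuousOn fun r hr => Or.inr ?_)
    rw [uIcc_of_le (by norm_num)] at hr
    exact pexpProfile_pos hr.1 hr.2
  have hannulus : EqOn (fun r => r ^ 2 * |ε * utestProfile r| ^ pexpProfile r)
      (fun r => r ^ 2 * ((ε / 4) ^ (5 / 2 : ℝ) + 0 * r)) (Ioo 1 2) := by
    intro r hr
    simp only [utestProfile, pexpProfile, if_neg (not_le.mpr hr.1), if_pos hr.2.le]
    rw [show |ε * -(1 / 4)| = ε / 4 by rw [abs_of_nonpos (by linarith)]; ring]
    ring
  calc 7 / 96 * ε ^ (5 / 2 : ℝ)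
      = ∫ r in 1..2, r ^ 2 * ((ε / 4) ^ (5 / 2 : ℝ) + 0 * r) := by
        rw [integral_sq_mul_affine, div_rpow hε (by norm_num), four_rpow_five_div_two]
        ring
    _ = ∫ r in 1..2, r ^ 2 * |ε * utestProfile r| ^ pexpProfile r :=
        (intervalIntegral.integral_congr_Ioo_of_le (by norm_num) hannulus).symm
    _ ≤ ∫ r in 0..3, r ^ 2 * |ε * utestProfile r| ^ pexpProfile r :=
        intervalIntegral.integral_mono_interval (by norm_num) (by norm_num) (by norm_num)
          (Eventually.of_forall fun r => by positivity) hcont.intervalIntegrable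

theorem le_modularScaled {ε : ℝ} (hε : 0 ≤ ε) : 7 * π / 24 * ε ^ (5 / 2 : ℝ) ≤ modularScaled ε := by
  have h := le_integral_sq_mul_abs_const_mul_utestProfile_rpow hε
  simp only [modularScaled, utest_eq_utestProfile, pexp_eq_pexpProfile]
  rw [setIntegral_closedBall_fun_norm_euclideanSpace_three
    (fun r => |ε * utestProfile r| ^ pexpProfile r) (by norm_num)]
  nlinarith [pi_pos]

def gradMajorant (ε : ℝ) : ℝ → ℝ := (Ioo 1 2)ᶜ.indicator fun r => ε ^ pexpProfile r

theorem norm_fderiv_const_mul_utest_rpow_le {ε : ℝ} (hε : 0 ≤ ε) {X : ℝ³} (hX : ‖X‖ ≤ 3) :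
    ‖fderiv ℝ (fun Y => ε * utest Y) X‖ ^ pexp X ≤ gradMajorant ε ‖X‖ := by
  have hp : 0 < pexp X := pexpProfile_pos (norm_nonneg X) hX
  by_cases hann : ‖X‖ ∈ Ioo 1 2
  · rw [fderiv_const_mul_utest_of_mem_annulus ε hann, norm_zero, zero_rpow hp.ne', gradMajorant,
      indicator_of_notMem (not_not.mpr hann)]
  · rw [gradMajorant, indicator_of_mem hann]
    exact rpow_le_rpow (norm_nonneg _)
      ((norm_fderiv_const_mul_utest_le ε X).trans_eq (abs_of_nonneg hε)) hp.le

theorem integral_sq_mul_gradMajorant_le {ε : ℝ} (hε : 1 < ε) :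
    ∫ r in 0..3, r ^ 2 * gradMajorant ε r ≤
      10 * ((ε ^ (5 / 2 : ℝ) - ε ^ (3 / 2 : ℝ)) / log ε) := by
  have hε₀ : 0 < ε := by linarith
  have hcont : Continuous fun r : ℝ => ε ^ r := continuous_const_rpow hε₀.ne'
  have hpos (r : ℝ) : 0 ≤ ε ^ r := (rpow_pos_of_pos hε₀ r).le
  rw [integral_eq_add_add_of_eqOn_Ioo (b := 1) (c := 2)
      (g₁ := fun r => r ^ 2 * ε ^ (3 / 2 + r)) (g₂ := fun _ => 0)
      (g₃ := fun r => r ^ 2 * ε ^ (9 / 2 - r)) (by norm_num) (by norm_num) (by norm_num)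
      ?_ ?_ ?_ (Continuous.intervalIntegrable (by fun_prop) _ _) intervalIntegrable_const
      (Continuous.intervalIntegrable (by fun_prop) _ _), intervalIntegral.integral_zero, add_zero]
  · have h₁ : ∫ r in 0..1, r ^ 2 * ε ^ (3 / 2 + r) ≤ 1 * ∫ r in 0..1, ε ^ (3 / 2 + r) :=
      integral_sq_mul_le (by norm_num) (by fun_prop) (fun r _ => hpos _)
        fun r hr => by nlinarith [hr.1, hr.2]
    have h₃ : ∫ r in 2..3, r ^ 2 * ε ^ (9 / 2 - r) ≤ 9 * ∫ r in 2..3, ε ^ (9 / 2 - r) :=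
      integral_sq_mul_le (by norm_num) (by fun_prop) (fun r _ => hpos _)
        fun r hr => by nlinarith [hr.1, hr.2]
    rw [intervalIntegral.integral_comp_add_left (fun r => ε ^ r)] at h₁
    rw [intervalIntegral.integral_comp_sub_left (fun r => ε ^ r)] at h₃
    norm_num only at h₁ h₃
    rw [integral_const_rpow hε₀ hε.ne'] at h₁ h₃
    linarith
  · intro r hr
    have hr' : r ∈ (Ioo 1 2)ᶜ := fun h => hr.2.not_gt h.1
    dsimp only [gradMajorant]
    rw [indicator_of_mem hr', pexpProfile, if_pos hr.2.le]
  · intro r hr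
    have hr' : r ∉ (Ioo 1 2)ᶜ := fun h => h hr
    dsimp only [gradMajorant]
    rw [indicator_of_notMem hr', mul_zero]
  · intro r hr
    have hr' : r ∈ (Ioo 1 2)ᶜ := fun h => hr.1.not_gt h.2
    dsimp only [gradMajorant]
    rw [indicator_of_mem hr', pexpProfile, if_neg (not_le.mpr (one_lt_two.trans hr.1)),
      if_neg (not_le.mpr hr.1)]

theorem gradModularScaled_le {ε : ℝ} (hε : 1 < ε) :
    gradModularScaled ε ≤ 40 * π * ε ^ (3 / 2 : ℝ) * (ε - 1) / log ε := by
  have hε₀ : 0 < ε := by linarith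
  have hint : IntegrableOn (fun X : ℝ³ => gradMajorant ε ‖X‖) (closedBall 0 3) := by
    have hc : Continuous fun X : ℝ³ => ε ^ pexp X :=
      (continuous_const_rpow hε₀.ne').comp (continuous_pexpProfile.comp continuous_norm)
    exact (hc.continuousOn.integrableOn_compact (isCompact_closedBall 0 3)).indicator
      (measurableSet_Ioo.compl.preimage continuous_norm.measurable)
  calc gradModularScaled ε
      ≤ ∫ X in closedBall (0 : ℝ³) 3, gradMajorant ε ‖X‖ := by
        refine integral_mono_of_nonneg (Eventually.of_forall fun X => by positivity) hint ?_
        filter_upwards [ae_restrict_mem measurableSet_closedBall] with X hX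
        exact norm_fderiv_const_mul_utest_rpow_le hε₀.le (mem_closedBall_zero_iff.mp hX)
    _ = 4 * π * ∫ r in 0..3, r ^ 2 * gradMajorant ε r :=
        setIntegral_closedBall_fun_norm_euclideanSpace_three _ (by norm_num)
    _ ≤ 4 * π * (10 * ((ε ^ (5 / 2 : ℝ) - ε ^ (3 / 2 : ℝ)) / log ε)) := by
        gcongr
        exact integral_sq_mul_gradMajorant_le hε
    _ = 40 * π * ε ^ (3 / 2 : ℝ) * (ε - 1) / log ε := by
        rw [show (5 / 2 : ℝ) = 3 / 2 + 1 by norm_num, rpow_add hε₀, rpow_one]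
        ring

theorem modularScaled_pos {ε : ℝ} (hε : 0 < ε) : 0 < modularScaled ε :=
  (by positivity : 0 < 7 * π / 24 * ε ^ (5 / 2 : ℝ)).trans_le
    (le_modularScaled hε.le)

theorem gradModularScaled_nonneg (ε : ℝ) : 0 ≤ gradModularScaled ε :=
  setIntegral_nonneg measurableSet_closedBall fun _ _ => by positivity

theorem gradModularScaled_div_modularScaled_le {ε : ℝ} (hε : 1 < ε) :
    gradModularScaled ε / modularScaled ε ≤ 960 / 7 * (log ε)⁻¹ := by
  have hε₀ : 0 < ε := by linarith
  have hlog : 0 < log ε := log_pos hε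
  have hgrad : gradModularScaled ε ≤ 40 * π * ε ^ (5 / 2 : ℝ) / log ε := by
    refine (gradModularScaled_le hε).trans ?_
    rw [show (5 / 2 : ℝ) = 3 / 2 + 1 by norm_num, rpow_add hε₀, rpow_one]
    have hpos : 0 < π * ε ^ (3 / 2 : ℝ) := mul_pos pi_pos (rpow_pos_of_pos hε₀ _)
    gcongr ?_ / _
    nlinarith
  calc gradModularScaled ε / modularScaled ε
      ≤ (40 * π * ε ^ (5 / 2 : ℝ) / log ε) / (7 * π / 24 * ε ^ (5 / 2 : ℝ)) :=
        div_le_div₀ (by positivity) hgrad (by positivity)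
          (le_modularScaled hε₀.le)
    _ = 960 / 7 * (log ε)⁻¹ := by
        field_simp
        ring

theorem tendsto_gradModularScaled_div_modularScaled :
    Tendsto (fun ε => gradModularScaled ε / modularScaled ε) atTop (𝓝 0) := by
  have hbound : Tendsto (fun ε => 960 / 7 * (log ε)⁻¹) atTop (𝓝 0) := by
    simpa using tendsto_log_atTop.inv_tendsto_atTop.const_mul (960 / 7 : ℝ)
  refine tendsto_of_tendsto_of_tendsto_of_le_of_le' tendsto_const_nhds hbound ?_ ?_
  · filter_upwards [eventually_gt_atTop 0] with ε hε
    exact div_nonneg (gradModularScaled_nonneg ε) (modularScaled_pos hε).le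
  · filter_upwards [eventually_gt_atTop 1] with ε hε
    exact gradModularScaled_div_modularScaled_le hε

/-- Failure of the modular Poincaré inequality for variable exponents:
with `v_ε = ε u`, for every `ε > 1` one has
`∫_{B₃} |∇v_ε|^{p} ≤ 40π ε^{3/2}(ε−1)/log ε` and
`∫_{B₃} |v_ε|^{p} ≥ (7π/24) ε^{5/2}`; the quotient tends to `0` as
`ε → ∞`, and there is no constant `C` with
`∫ |w|^{p} ≤ C ∫ |∇w|^{p}` for all mean-zero Lipschitz `w` on `B₃`. -/
theorem stmt_19 :
    (∀ ε : ℝ, 1 < ε →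
      (∫ X in Metric.closedBall (0 : EuclideanSpace ℝ (Fin 3)) 3,
          ‖fderiv ℝ (fun Y => ε * utest Y) X‖ ^ pexp X) ≤
        40 * π * ε ^ ((3:ℝ)/2) * (ε - 1) / Real.log ε ∧
      (7 * π / 24) * ε ^ ((5:ℝ)/2) ≤
        ∫ X in Metric.closedBall (0 : EuclideanSpace ℝ (Fin 3)) 3,
          |ε * utest X| ^ pexp X) ∧
    Filter.Tendsto (fun ε : ℝ =>
      (∫ X in Metric.closedBall (0 : EuclideanSpace ℝ (Fin 3)) 3,
          ‖fderiv ℝ (fun Y => ε * utest Y) X‖ ^ pexp X) /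
        ∫ X in Metric.closedBall (0 : EuclideanSpace ℝ (Fin 3)) 3,
          |ε * utest X| ^ pexp X) Filter.atTop (nhds 0) ∧
    ¬ ∃ C : ℝ, ∀ w : EuclideanSpace ℝ (Fin 3) → ℝ,
      (∃ K : NNReal, LipschitzWith K w) →
      (∫ X in Metric.closedBall (0 : EuclideanSpace ℝ (Fin 3)) 3, w X) = 0 →
      (∫ X in Metric.closedBall (0 : EuclideanSpace ℝ (Fin 3)) 3,
          |w X| ^ pexp X) ≤
        C * ∫ X in Metric.closedBall (0 : EuclideanSpace ℝ (Fin 3)) 3,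
          ‖fderiv ℝ w X‖ ^ pexp X := by
  refine ⟨fun ε hε => ⟨gradModularScaled_le hε, le_modularScaled (by linarith)⟩,
    tendsto_gradModularScaled_div_modularScaled, ?_⟩
  rintro ⟨C, hC⟩
  obtain ⟨ε, hlt⟩ := (eventually_const_mul_lt_of_tendsto_div
    ((eventually_gt_atTop 0).mono fun _ => modularScaled_pos)
    tendsto_gradModularScaled_div_modularScaled C).exists
  refine hlt.not_ge (hC _ ⟨_, lipschitzWith_const_mul_utest ε⟩ ?_)
  rw [integral_const_mul, setIntegral_utest_closedBall, mul_zero]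

end
end
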